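/- Let k ≥ 3 and take m = k. Write D(k²,k) = {d_0 < d_1 < ⋯ < d_j}, set d_{-1} := 0, define F_i := ⋃_{α = d_{i−1}+1}^{d_i} {d_i·k − α, (d_i+1)·k − α, …, k·k − α} ⊆ Z_{k²} for each i ∈ {0,…,j}, and let F := ⋃_{i=0}^{j} F_i. List the elements of F in increasing order of their representatives in {0,1,…,k²−1} as f_1 < f_2 < ⋯ < f_{|F|}, and define F' := {f_l : ⌈l/⌊k/2⌋⌉ is odd} and F'' := {f_l : ⌈l/⌊k/2⌋⌉ is even}. Then neither F' nor F'' contains all of the elements k−1, 2k−1, …, k²−1 of Z_{k²}. -/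

import Mathlib

/-- `A` is a `k`-term cyclic arithmetic progression mod `N` with common difference `d`:
it is a `k`-element subset of `ZMod N` whose elements are `t, t+d, …, t+(k-1)d`. -/
def IsAPWith (N k : ℕ) (A : Finset (ZMod N)) (d : ZMod N) : Prop :=
  A.card = k ∧ ∃ t : ZMod N, A = (Finset.range k).image (fun i : ℕ => t + (i : ZMod N) * d)

/-- `A` is a `k`-term cyclic arithmetic progression mod `N`. -/
def IsAP (N k : ℕ) (A : Finset (ZMod N)) : Prop :=
  ∃ d : ZMod N, IsAPWith N k A d

/-- `D(N,k)`: the set of values `gcd(d,k)` where `d` ranges over all `d ∈ {1,…,N-1}` that are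
a common difference of some `k`-term cyclic arithmetic progression mod `N`. -/
def Ddiff (N k : ℕ) : Set ℕ :=
  {g | ∃ d : ℕ, 1 ≤ d ∧ d ≤ N - 1 ∧
    (∃ A : Finset (ZMod N), IsAPWith N k A (d : ZMod N)) ∧ g = Nat.gcd d k}

/-- `b(N,k)`: the maximum size of a subset of `ZMod N` containing no `k`-term cyclic
arithmetic progression mod `N`. -/
noncomputable def bNum (N k : ℕ) : ℕ :=
  sSup {n | ∃ B : Finset (ZMod N), B.card = n ∧ ∀ A ⊆ B, ¬ IsAP N k A}

/-- `χ(N,k)`: the minimum number of parts needed to partition `ZMod N` into subsets none of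
which contains a `k`-term cyclic arithmetic progression mod `N` (phrased via colorings). -/
noncomputable def chiNum (N k : ℕ) : ℕ :=
  sInf {r | ∃ c : ZMod N → Fin r, ∀ A : Finset (ZMod N), IsAP N k A → ¬ ∃ i, ∀ x ∈ A, c x = i}

/-!
Since `1 ∈ D(k², k)`, `d₀ = 1` and `F₀` contains every target `q k - 1`; moreover no element of `F`
lies below `k - 1`. Every element of `F` strictly between two consecutive targets `q k - 1` and
`(q + 1) k - 1` with `q + 1 < k` has the form `(q + 1) k - α` with `α` bounded by a proper divisor
of `k`, hence `α ≤ ⌊k/2⌋`. The position of an element in the increasing enumeration is the number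
of elements of `F` not above it, so the positions of consecutive targets differ by at most `⌊k/2⌋`.
Hence the first target `k - 1` sits at position `1`, in the first (odd) block, while the positions
of the targets cannot jump over the second (even) block `(⌊k/2⌋, 2⌊k/2⌋]`.
-/

open Finset

theorem dvd_of_mem_Ddiff {N k g : ℕ} (h : g ∈ Ddiff N k) : g ∣ k := by
  obtain ⟨d, -, -, -, rfl⟩ := h
  exact Nat.gcd_dvd_right d k

theorem one_mem_Ddiff {N k : ℕ} (hkN : k ≤ N) (hN : 2 ≤ N) : 1 ∈ Ddiff N k := by
  refine ⟨1, le_rfl, by omega, ⟨_, ?_, 0, rfl⟩, (Nat.gcd_one_left k).symm⟩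
  rw [card_image_of_injOn, card_range]
  intro a ha b hb hab
  simp only [coe_range, Set.mem_Iio] at ha hb
  simpa only [Nat.cast_one, mul_one, zero_add, ZMod.natCast_eq_natCast_iff',
    Nat.mod_eq_of_lt (ha.trans_le hkN), Nat.mod_eq_of_lt (hb.trans_le hkN)] using hab

theorem apply_one_eq_one_of_lt_succ {e : ℕ → ℕ} {n i : ℕ} (he0 : e 0 = 0)
    (hmono : ∀ i < n, e i < e (i + 1)) (hi : 1 ≤ i) (hin : i ≤ n) (hei : e i = 1) :
    e 1 = 1 := by
  have hstrict : StrictMonoOn e (Set.Iic n) := strictMonoOn_Iic_of_lt_succ hmono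
  have h01 : e 0 < e 1 := hstrict (by simp) (by simp; omega) one_pos
  have h1i : e 1 ≤ e i := hstrict.monotoneOn (by simp; omega) (by simpa using hin) hi
  omega

theorem le_half_of_dvd_of_lt {d k : ℕ} (hd : d ∣ k) (hdk : d < k) : d ≤ k / 2 := by
  obtain ⟨t, rfl⟩ := hd
  have ht : 2 ≤ t := by
    rcases t with _ | _ | t <;> simp_all
  rw [Nat.le_div_iff_mul_le two_pos]
  exact Nat.mul_le_mul_left d ht

/-- The representatives of the elements of the paper's `F_i` have this shape, with `d = d_i` and
`p₂ = α`. -/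
def IsOffsetMultiple (k n : ℕ) : Prop :=
  ∃ d p₁ p₂ : ℕ, d ∣ k ∧ d ≤ p₁ ∧ p₁ ≤ k ∧ 1 ≤ p₂ ∧ p₂ ≤ d ∧ n + p₂ = p₁ * k

namespace IsOffsetMultiple

variable {k n : ℕ}

theorem sub_one_le (h : IsOffsetMultiple k n) : k - 1 ≤ n := by
  obtain ⟨d, p₁, p₂, -, hdp, -, hp₂, hp₂d, hn⟩ := h
  have hp₁ : p₁ * (k - 1) + p₁ = p₁ * k := by
    rcases k with _ | k
    · omega
    · rw [Nat.add_sub_cancel, Nat.mul_succ]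
  have hk : k - 1 ≤ p₁ * (k - 1) := Nat.le_mul_of_pos_left _ (by omega)
  omega

theorem offset_mem_Icc (h : IsOffsetMultiple k n) {q : ℕ} (hq : q + 2 ≤ k)
    (hlo : q * k - 1 < n) (hhi : n ≤ (q + 1) * k - 1) : (q + 1) * k - n ∈ Icc 1 (k / 2) := by
  obtain ⟨d, p₁, p₂, hd, hdp, hp₁, hp₂, hp₂d, hn⟩ := h
  have hsucc : (q + 1) * k = q * k + k := Nat.succ_mul q k
  have hp : p₁ = q + 1 := by
    have hlt : q * k < p₁ * k := by omega
    have hgt : p₁ * k < (q + 2) * k := by rw [Nat.succ_mul]; omega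
    have := Nat.lt_of_mul_lt_mul_right hlt
    have := Nat.lt_of_mul_lt_mul_right hgt
    omega
  subst hp
  have hdk : d ≤ k / 2 := le_half_of_dvd_of_lt hd (by omega)
  rw [mem_Icc]
  omega

end IsOffsetMultiple

theorem isOffsetMultiple_val_of_mem_image {k a d : ℕ} {x : ZMod (k * k)} (hd : d ∣ k)
    (ha : 1 ≤ a)
    (hx : x ∈ image (fun p : ℕ × ℕ => ((p.1 * k - p.2 : ℕ) : ZMod (k * k)))
      (Icc d k ×ˢ Icc a d)) :
    IsOffsetMultiple k x.val := by
  obtain ⟨⟨p₁, p₂⟩, hp, rfl⟩ := mem_image.1 hx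
  simp only [mem_product, mem_Icc] at hp
  obtain ⟨⟨hdp, hp₁⟩, hap, hp₂d⟩ := hp
  have hlt : p₁ * k - p₂ < k * k := by
    have := Nat.mul_le_mul_right k hp₁
    have := Nat.mul_pos (show 0 < k by omega) (show 0 < k by omega)
    omega
  have hle : p₂ ≤ p₁ * k := (hp₂d.trans hdp).trans (Nat.le_mul_of_pos_right _ (by omega))
  refine ⟨d, p₁, p₂, hd, hdp, hp₁, by omega, hp₂d, ?_⟩
  rw [ZMod.val_natCast_of_lt hlt]
  omega

theorem isOffsetMultiple_val_of_mem_biUnion {k j : ℕ} {e : ℕ → ℕ}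
    {F : ℕ → Finset (ZMod (k * k))} (hdvd : ∀ i ≤ j, e (i + 1) ∣ k)
    (hF : ∀ i, F i =
      image (fun p : ℕ × ℕ => ((p.1 * k - p.2 : ℕ) : ZMod (k * k)))
        (Icc (e (i + 1)) k ×ˢ Icc (e i + 1) (e (i + 1))))
    {x : ZMod (k * k)} (hx : x ∈ (range (j + 1)).biUnion F) : IsOffsetMultiple k x.val := by
  obtain ⟨i, hi, hxi⟩ := mem_biUnion.1 hx
  exact isOffsetMultiple_val_of_mem_image (hdvd i (by simpa [Nat.lt_succ_iff] using hi))
    (Nat.le_add_left 1 _) (hF i ▸ hxi)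

theorem natCast_mul_sub_one_mem_biUnion {k j q : ℕ} {e : ℕ → ℕ}
    {F : ℕ → Finset (ZMod (k * k))} (he0 : e 0 = 0) (he1 : e 1 = 1)
    (hF : ∀ i, F i =
      image (fun p : ℕ × ℕ => ((p.1 * k - p.2 : ℕ) : ZMod (k * k)))
        (Icc (e (i + 1)) k ×ˢ Icc (e i + 1) (e (i + 1))))
    (hq : 1 ≤ q) (hqk : q ≤ k) : ((q * k - 1 : ℕ) : ZMod (k * k)) ∈ (range (j + 1)).biUnion F := by
  refine mem_biUnion.2 ⟨0, by simp, hF 0 ▸ mem_image.2 ⟨(q, 1), ?_, rfl⟩⟩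
  simp only [mem_product, mem_Icc, he0, he1]
  omega

section Counting

variable {k : ℕ} [NeZero k] {S : Finset (ZMod (k * k))}

theorem val_natCast_mul_sub_one {q : ℕ} (hq : q ≤ k) :
    ((q * k - 1 : ℕ) : ZMod (k * k)).val = q * k - 1 := by
  have := Nat.mul_le_mul_right k hq
  have := Nat.mul_pos (NeZero.pos k) (NeZero.pos k)
  exact ZMod.val_natCast_of_lt (by omega)

theorem card_filter_val_le_succ_mul_sub_one_le (hS : ∀ x ∈ S, IsOffsetMultiple k x.val)
    {q : ℕ} (hq : q + 2 ≤ k) :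
    #{x ∈ S | x.val ≤ (q + 1) * k - 1} ≤ #{x ∈ S | x.val ≤ q * k - 1} + k / 2 := by
  have hsub : {x ∈ S | x.val ≤ (q + 1) * k - 1} ⊆ {x ∈ S | x.val ≤ q * k - 1} ∪
      (Icc 1 (k / 2)).image (fun p => (((q + 1) * k - p : ℕ) : ZMod (k * k))) := by
    intro x hx
    obtain ⟨hxS, hxq⟩ := mem_filter.1 hx
    rw [mem_union, mem_filter]
    by_cases hlo : x.val ≤ q * k - 1
    · exact Or.inl ⟨hxS, hlo⟩
    · refine Or.inr (mem_image.2 ⟨_, (hS x hxS).offset_mem_Icc hq (by omega) hxq, ?_⟩)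
      rw [Nat.sub_sub_self (by omega), ZMod.natCast_zmod_val]
  calc #{x ∈ S | x.val ≤ (q + 1) * k - 1}
      ≤ #({x ∈ S | x.val ≤ q * k - 1} ∪
          (Icc 1 (k / 2)).image (fun p => (((q + 1) * k - p : ℕ) : ZMod (k * k)))) :=
        card_le_card hsub
    _ ≤ #{x ∈ S | x.val ≤ q * k - 1} + #(Icc 1 (k / 2)) :=
        (card_union_le _ _).trans (Nat.add_le_add_left card_image_le _)
    _ = #{x ∈ S | x.val ≤ q * k - 1} + k / 2 := by rw [Nat.card_Icc, Nat.add_sub_cancel]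

theorem le_card_filter_val_le_mul_sub_one
    (htarget : ∀ q, 1 ≤ q → q ≤ k → ((q * k - 1 : ℕ) : ZMod (k * k)) ∈ S)
    {n : ℕ} (hn : n ≤ k) : n ≤ #{x ∈ S | x.val ≤ n * k - 1} := by
  have hsub : (Icc 1 n).image (fun q => ((q * k - 1 : ℕ) : ZMod (k * k))) ⊆
      {x ∈ S | x.val ≤ n * k - 1} := by
    intro x hx
    obtain ⟨q, hq, rfl⟩ := mem_image.1 hx
    rw [mem_Icc] at hq
    refine mem_filter.2 ⟨htarget q hq.1 (by omega), ?_⟩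
    rw [val_natCast_mul_sub_one (by omega : q ≤ k)]
    exact Nat.sub_le_sub_right (Nat.mul_le_mul_right k hq.2) 1
  have hinj : Set.InjOn (fun q => ((q * k - 1 : ℕ) : ZMod (k * k))) (Icc 1 n) := by
    intro a ha b hb hab
    simp only [coe_Icc, Set.mem_Icc] at ha hb
    have hv := congrArg ZMod.val hab
    simp only [val_natCast_mul_sub_one (by omega : a ≤ k),
      val_natCast_mul_sub_one (by omega : b ≤ k)] at hv
    have := Nat.mul_le_mul_right k ha.1
    have := Nat.mul_le_mul_right k hb.1
    exact Nat.eq_of_mul_eq_mul_right (NeZero.pos k) (by omega)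
  calc n = #((Icc 1 n).image (fun q => ((q * k - 1 : ℕ) : ZMod (k * k)))) := by
        rw [card_image_of_injOn hinj, Nat.card_Icc, Nat.add_sub_cancel]
    _ ≤ _ := card_le_card hsub

end Counting

section Enumeration

variable {β : Type*} [DecidableEq β] {S : Finset β} {v : β → ℕ} {f : ℕ → β}

theorem card_filter_le_eq_of_enum
    (hsurj : ∀ x ∈ S, ∃ l, 1 ≤ l ∧ l ≤ #S ∧ f l = x)
    (hmem : ∀ l, 1 ≤ l → l ≤ #S → f l ∈ S)
    (hmono : ∀ l₁ l₂, 1 ≤ l₁ → l₁ < l₂ → l₂ ≤ #S → v (f l₁) < v (f l₂))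
    {l : ℕ} (hl₁ : 1 ≤ l) (hl : l ≤ #S) : #{x ∈ S | v x ≤ v (f l)} = l := by
  have hfilter : {x ∈ S | v x ≤ v (f l)} = (Icc 1 l).image f := by
    ext x
    simp only [mem_filter, mem_image, mem_Icc]
    constructor
    · rintro ⟨hx, hxl⟩
      obtain ⟨l', hl'₁, hl', rfl⟩ := hsurj x hx
      refine ⟨l', ⟨hl'₁, ?_⟩, rfl⟩
      by_contra! h
      exact absurd (hmono l l' hl₁ h hl') (not_lt.2 hxl)
    · rintro ⟨l', ⟨hl'₁, hl'⟩, rfl⟩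
      refine ⟨hmem l' hl'₁ (hl'.trans hl), ?_⟩
      rcases hl'.lt_or_eq with h | rfl
      · exact (hmono l' l hl'₁ h hl).le
      · exact le_rfl
  rw [hfilter, card_image_of_injOn, Nat.card_Icc, Nat.add_sub_cancel]
  intro a ha b hb hab
  simp only [coe_Icc, Set.mem_Icc] at ha hb
  by_contra hne
  rcases Nat.lt_or_gt_of_ne hne with h | h
  · exact (hmono a b ha.1 h (hb.2.trans hl)).ne (congrArg v hab)
  · exact (hmono b a hb.1 h (ha.2.trans hl)).ne (congrArg v hab.symm)

end Enumeration

theorem exists_mem_Ioc_two_mul_of_step_le {L : ℕ → ℕ} {m : ℕ} (h0 : L 0 ≤ m) :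
    ∀ n, (∀ q < n, L (q + 1) ≤ L q + m) → m < L n → ∃ q ≤ n, m < L q ∧ L q ≤ 2 * m
  | 0, _, hn => absurd hn (not_lt.2 h0)
  | n + 1, hstep, hn => by
    by_cases hprev : m < L n
    · obtain ⟨q, hq, hLq⟩ :=
        exists_mem_Ioc_two_mul_of_step_le h0 n (fun q hq => hstep q (by omega)) hprev
      exact ⟨q, by omega, hLq⟩
    · exact ⟨n + 1, le_rfl, hn, by have := hstep n n.lt_succ_self; omega⟩

theorem add_sub_one_div_eq_succ {b m l : ℕ} (hlo : b * m < l) (hhi : l ≤ (b + 1) * m) :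
    (l + m - 1) / m = b + 1 := by
  have := add_one_mul b m
  have := add_one_mul (b + 1) m
  exact Nat.div_eq_of_lt_le (by omega) (by omega)

theorem stmt_14 (k : ℕ) (hk : 3 ≤ k) (j : ℕ) (e : ℕ → ℕ)
    (he0 : e 0 = 0)
    (hmono : ∀ i ≤ j, e i < e (i + 1))
    (hD : Ddiff (k * k) k = {x | ∃ i, 1 ≤ i ∧ i ≤ j + 1 ∧ x = e i})
    (F : ℕ → Finset (ZMod (k * k)))
    (hF : ∀ i, F i =
      Finset.image (fun p : ℕ × ℕ => ((p.1 * k - p.2 : ℕ) : ZMod (k * k)))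
        ((Finset.Icc (e (i + 1)) k) ×ˢ (Finset.Icc (e i + 1) (e (i + 1)))))
    (f : ℕ → ZMod (k * k))
    -- f lists the elements of F = ⋃ᵢ Fᵢ in increasing order of representatives:
    -- f 1, f 2, …, f |F|
    (hfsurj : ∀ x ∈ (Finset.range (j + 1)).biUnion F,
      ∃ l, 1 ≤ l ∧ l ≤ ((Finset.range (j + 1)).biUnion F).card ∧ f l = x)
    (hfmem : ∀ l, 1 ≤ l → l ≤ ((Finset.range (j + 1)).biUnion F).card →
      f l ∈ (Finset.range (j + 1)).biUnion F)
    (hfmono : ∀ l₁ l₂, 1 ≤ l₁ → l₁ < l₂ → l₂ ≤ ((Finset.range (j + 1)).biUnion F).card →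
      (f l₁).val < (f l₂).val) :
    -- F' = {f l : ⌈l/⌊k/2⌋⌉ odd} does not contain all of k-1, 2k-1, …, k²-1,
    -- and neither does F'' = {f l : ⌈l/⌊k/2⌋⌉ even}.
    (¬ ∀ q, 1 ≤ q → q ≤ k →
        ∃ l, 1 ≤ l ∧ l ≤ ((Finset.range (j + 1)).biUnion F).card ∧
          Odd ((l + k / 2 - 1) / (k / 2)) ∧ f l = ((q * k - 1 : ℕ) : ZMod (k * k))) ∧
      (¬ ∀ q, 1 ≤ q → q ≤ k →
        ∃ l, 1 ≤ l ∧ l ≤ ((Finset.range (j + 1)).biUnion F).card ∧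
          Even ((l + k / 2 - 1) / (k / 2)) ∧ f l = ((q * k - 1 : ℕ) : ZMod (k * k))) := by
  have : NeZero k := ⟨by omega⟩
  set S := (Finset.range (j + 1)).biUnion F
  set m := k / 2
  set L : ℕ → ℕ := fun q => #{x ∈ S | x.val ≤ q * k - 1}
  have he1 : e 1 = 1 := by
    obtain ⟨i, hi, hij, hei⟩ := (hD ▸ one_mem_Ddiff (by nlinarith) (by nlinarith) :
      (1 : ℕ) ∈ {x | ∃ i, 1 ≤ i ∧ i ≤ j + 1 ∧ x = e i})
    exact apply_one_eq_one_of_lt_succ he0 (fun i hi => hmono i (by omega)) hi hij hei.symm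
  have hS : ∀ x ∈ S, IsOffsetMultiple k x.val := fun x =>
    isOffsetMultiple_val_of_mem_biUnion
      (fun i hi => dvd_of_mem_Ddiff
        (show e (i + 1) ∈ Ddiff (k * k) k from hD ▸ ⟨i + 1, by omega, by omega, rfl⟩)) hF
  have htarget : ∀ q, 1 ≤ q → q ≤ k → ((q * k - 1 : ℕ) : ZMod (k * k)) ∈ S := fun _ =>
    natCast_mul_sub_one_mem_biUnion he0 he1 hF
  have hL0 : L 0 = 0 :=
    card_eq_zero.2 (filter_eq_empty_iff.2 fun x hx => by have := (hS x hx).sub_one_le; omega)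
  have hstep : ∀ q, q + 2 ≤ k → L (q + 1) ≤ L q + m := fun q hq =>
    card_filter_val_le_succ_mul_sub_one_le hS hq
  have hposition : ∀ q l, q ≤ k → 1 ≤ l → l ≤ #S →
      f l = ((q * k - 1 : ℕ) : ZMod (k * k)) → l = L q := by
    intro q l hqk hl hlS hfl
    rw [← card_filter_le_eq_of_enum hfsurj hfmem hfmono hl hlS, hfl, val_natCast_mul_sub_one hqk]
  constructor
  · intro hall
    obtain ⟨Q, hQ, hmQ, hQm⟩ := exists_mem_Ioc_two_mul_of_step_le (L := L) (by omega) (m + 1)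
      (fun q hq => hstep q (by omega)) (le_card_filter_val_le_mul_sub_one htarget (by omega))
    have hQ1 : 1 ≤ Q := Nat.pos_of_ne_zero fun h => by rw [h, hL0] at hmQ; omega
    obtain ⟨l, hl, hlS, hodd, hfl⟩ := hall Q hQ1 (by omega)
    rw [hposition Q l (by omega) hl hlS hfl, add_sub_one_div_eq_succ (b := 1) (by omega) (by omega)]
      at hodd
    exact Nat.not_odd_iff_even.2 even_two hodd
  · intro hall
    obtain ⟨l, hl, hlS, heven, hfl⟩ := hall 1 le_rfl (by omega)
    have hlm : l ≤ m := by
      rw [hposition 1 l (by omega) hl hlS hfl]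
      simpa [hL0] using hstep 0 (by omega)
    rw [add_sub_one_div_eq_succ (b := 0) (by omega) (by omega)] at heven
    exact Nat.not_even_one heven
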